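/- arXiv:1908.11698 — 7 statements merged into one kernel-verified Lean document; each statement's English description precedes it below -/
import Mathlib

section
/- Similarity transformation of the Rayleigh system matrix: let E, λ̂, μ̂ be real numbers with μ̂ ≠ 0 and λ̂+2μ̂ ≠ 0, let A₀^S be the 4×4 matrix defined in the context, let R = [[1, 0, 0, 1 − E/μ̂], [0, 1 − E/(λ̂+2μ̂), 1, 0], [0, 2μ̂(1 − E/(λ̂+2μ̂)), 2μ̂ − E, 0], [2μ̂ − E, 0, 0, 2(μ̂ − E)]] and let 𝓛 = [[0, 1 − E/(λ̂+2μ̂), 0, 0], [1, 0, 0, 0], [0, 0, 0, 1 − E/μ̂], [0, 0, 1, 0]]. Then A₀^S · R = R · 𝓛 (so that whenever R is invertible, R⁻¹ A₀^S R = 𝓛). -/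
open Matrix

/-- Similarity transformation of the Rayleigh system matrix: `A₀^S · R = R · 𝓛`,
so that whenever `R` is invertible, `R⁻¹ A₀^S R = 𝓛`. -/
theorem rayleigh_system_matrix_similarity (E lam mu : ℝ) (hmu : mu ≠ 0)
    (hlm : lam + 2*mu ≠ 0) :
    let A : Matrix (Fin 4) (Fin 4) ℝ :=
      !![0, -1, 1/mu, 0;
         lam/(lam+2*mu), 0, 0, 1/(lam+2*mu);
         -E + ((lam+2*mu)^2 - lam^2)/(lam+2*mu), 0, 0, -lam/(lam+2*mu);
         0, -E, 1, 0]
    let R : Matrix (Fin 4) (Fin 4) ℝ :=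
      !![1, 0, 0, 1 - E/mu;
         0, 1 - E/(lam+2*mu), 1, 0;
         0, 2*mu*(1 - E/(lam+2*mu)), 2*mu - E, 0;
         2*mu - E, 0, 0, 2*(mu - E)]
    let L : Matrix (Fin 4) (Fin 4) ℝ :=
      !![0, 1 - E/(lam+2*mu), 0, 0;
         1, 0, 0, 0;
         0, 0, 0, 1 - E/mu;
         0, 0, 1, 0]
    A * R = R * L ∧ (IsUnit R.det → R⁻¹ * A * R = L) := by
  intro A R L
  have h : A * R = R * L := by
    ext i j
    fin_cases i <;> fin_cases j <;>
      simp [A, R, L, Matrix.mul_apply, Fin.sum_univ_four, Matrix.vecHead, Matrix.vecTail] <;>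
      (try field_simp) <;> ring
  refine ⟨h, fun hR => ?_⟩
  rw [Matrix.mul_assoc, h, ← Matrix.mul_assoc, Matrix.nonsing_inv_mul _ hR, Matrix.one_mul]
end

section
/- Abel double-integral identity with reciprocal weight: let 0 < E₀ < E be real numbers and let g : [E₀, E] → ℝ be continuous. Then ∫_{E₀}^{E} u^{−1} (E−u)^{−1/2} ( ∫_{E₀}^{u} g(v) (u−v)^{−1/2} dv ) du = π ∫_{E₀}^{E} g(v) (E·v)^{−1/2} dv, where all integrals converge absolutely. -/
/-!
Write the left-hand side as the integral of `g v * (u √(E - u) √(u - v))⁻¹` over the triangle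
`E₀ < v < u < E` and exchange the order of integration. The inner integral in `u` becomes the
kernel `∫_v^E du / (u √(E - u) √(u - v)) = π / √(E v)`, computed from an explicit arcsin
primitive. As the kernel is nonnegative, the same computation with `|g|` in place of `g` gives
integrability on the triangle (Tonelli), which justifies Fubini and all convergence claims.
-/

open Set MeasureTheory Real

theorem intervalIntegrable_inv_sqrt_sub {a u : ℝ} (h : a ≤ u) :
    IntervalIntegrable (fun v => (√(u - v))⁻¹) volume a u := by
  refine intervalIntegral.intervalIntegrable_deriv_of_nonneg (g := fun v => -2 * √(u - v))
    (by fun_prop) (fun v hv => ?_) (fun v _ => inv_nonneg.2 (sqrt_nonneg _))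
  rw [min_eq_left h, max_eq_right h] at hv
  have hpos : 0 < u - v := sub_pos.2 hv.2
  refine ((((hasDerivAt_id' v).const_sub u).sqrt hpos.ne').const_mul (-2)).congr_deriv ?_
  have := sqrt_pos.2 hpos
  field_simp

/-- A primitive of `u ↦ (u √(E - u) √(u - v))⁻¹` on `(v, E)`: the Möbius map
`u ↦ (2Ev - u(E + v)) / (u(E - v))` sends `v, E` to `1, -1`, and one minus its square is
`4Ev(u - v)(E - u) / (u(E - v))²`. -/
noncomputable def abelPrimitive (E v u : ℝ) : ℝ :=
  -arcsin ((2 * E * v - u * (E + v)) / (u * (E - v))) / √(E * v)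

section AbelKernel

variable {v E : ℝ}

theorem hasDerivAt_abelPrimitive (hv : 0 < v) {u : ℝ} (hu : u ∈ Ioo v E) :
    HasDerivAt (abelPrimitive E v) (u * √(E - u) * √(u - v))⁻¹ u := by
  obtain ⟨hvu, huE⟩ := hu
  have hu0 : 0 < u := hv.trans hvu
  have hEv : 0 < E - v := by linarith
  have hEv' : 0 < E * v := by nlinarith
  have hsqrt_uv := sqrt_pos.2 (sub_pos.2 hvu)
  have hsqrt_Eu := sqrt_pos.2 (sub_pos.2 huE)
  have hsqrt_Ev := sqrt_pos.2 hEv'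
  set φ : ℝ → ℝ := fun u => (2 * E * v - u * (E + v)) / (u * (E - v))
  have hφ : HasDerivAt φ (-(2 * E * v) / (u ^ 2 * (E - v))) u := by
    refine (((hasDerivAt_id' u).mul_const (E + v) |>.const_sub (2 * E * v)).div
      ((hasDerivAt_id' u).mul_const (E - v)) (by positivity)).congr_deriv ?_
    field_simp
    ring
  have hroot : √(1 - φ u ^ 2) = 2 * √(E * v) * √(u - v) * √(E - u) / (u * (E - v)) := by
    have : 1 - φ u ^ 2 = (2 * √(E * v) * √(u - v) * √(E - u) / (u * (E - v))) ^ 2 := by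
      simp only [φ, div_pow, mul_pow, sq_sqrt hEv'.le, sq_sqrt (sub_pos.2 hvu).le,
        sq_sqrt (sub_pos.2 huE).le]
      field_simp
      ring
    rw [this, sqrt_sq (by positivity)]
  have hφu : 0 < 1 - φ u ^ 2 := by
    rw [← sqrt_pos, hroot]
    positivity
  have hne : φ u ≠ -1 ∧ φ u ≠ 1 := by
    constructor <;> rintro h <;> rw [h] at hφu <;> norm_num at hφu
  refine (((hasDerivAt_arcsin hne.1 hne.2).comp u hφ).neg.div_const √(E * v)).congr_deriv ?_
  rw [hroot]
  field_simp
  linear_combination -sq_sqrt hEv'.le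

theorem continuousOn_abelPrimitive (hv : 0 < v) (hvE : v < E) :
    ContinuousOn (abelPrimitive E v) (Icc v E) := by
  refine ((continuous_arcsin.comp_continuousOn ?_).neg).div_const _
  exact ContinuousOn.div (by fun_prop) (by fun_prop) fun u hu =>
    mul_ne_zero (hv.trans_le hu.1).ne' (sub_pos.2 hvE).ne'

theorem intervalIntegrable_inv_mul_sqrt_mul_sqrt (hv : 0 < v) (hvE : v < E) :
    IntervalIntegrable (fun u => (u * √(E - u) * √(u - v))⁻¹) volume v E := by
  refine intervalIntegral.intervalIntegrable_deriv_of_nonneg (g := abelPrimitive E v)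
    (by rw [uIcc_of_le hvE.le]; exact continuousOn_abelPrimitive hv hvE) (fun u hu => ?_)
    (fun u hu => ?_) <;> rw [min_eq_left hvE.le, max_eq_right hvE.le] at hu
  · exact hasDerivAt_abelPrimitive hv hu
  · have := hv.trans hu.1
    positivity

theorem integral_inv_mul_sqrt_mul_sqrt (hv : 0 < v) (hvE : v < E) :
    ∫ u in v..E, (u * √(E - u) * √(u - v))⁻¹ = π / √(E * v) := by
  rw [intervalIntegral.integral_eq_sub_of_hasDerivAt_of_le hvE.le
    (continuousOn_abelPrimitive hv hvE) (fun u hu => hasDerivAt_abelPrimitive hv hu)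
    (intervalIntegrable_inv_mul_sqrt_mul_sqrt hv hvE)]
  have hEv : E - v ≠ 0 := (sub_pos.2 hvE).ne'
  have hφE : (2 * E * v - E * (E + v)) / (E * (E - v)) = -1 := by
    field_simp [(hv.trans hvE).ne']
    ring
  have hφv : (2 * E * v - v * (E + v)) / (v * (E - v)) = 1 := by
    field_simp [hv.ne']
    ring
  rw [abelPrimitive, abelPrimitive, hφE, hφv, arcsin_neg_one, arcsin_one]
  ring

theorem integral_norm_mul_inv_mul_sqrt_mul_sqrt (hv : 0 < v) (hvE : v < E) (c : ℝ) :
    ∫ u in v..E, ‖c * (u * √(E - u) * √(u - v))⁻¹‖ = |c| * (π / √(E * v)) := by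
  rw [← integral_inv_mul_sqrt_mul_sqrt hv hvE, ← intervalIntegral.integral_const_mul]
  refine intervalIntegral.integral_congr fun u hu => ?_
  rw [uIcc_of_le hvE.le] at hu
  have := hv.trans_le hu.1
  have hk : 0 ≤ (u * √(E - u) * √(u - v))⁻¹ := by positivity
  simp only [norm_mul, norm_eq_abs, abs_of_nonneg hk]

end AbelKernel

theorem integrable_restrict_prod_restrict_iff {f : ℝ × ℝ → ℝ} {s t : Set ℝ} :
    Integrable f ((volume.restrict s).prod (volume.restrict t)) ↔ IntegrableOn f (s ×ˢ t) := by
  rw [Measure.prod_restrict, ← Measure.volume_eq_prod, IntegrableOn]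

section LowerTriangular

noncomputable def lowerTriangular (F : ℝ → ℝ → ℝ) : ℝ × ℝ → ℝ :=
  {p : ℝ × ℝ | p.2 < p.1}.indicator (Function.uncurry F)

variable {a b : ℝ} {F : ℝ → ℝ → ℝ}

theorem lowerTriangular_slice_fst (u : ℝ) :
    (fun v => lowerTriangular F (u, v)) = (Iio u).indicator (F u) := by
  ext v
  simp only [lowerTriangular, indicator_apply, mem_ofPred_eq, mem_Iio, Function.uncurry_apply_pair]

theorem lowerTriangular_slice_snd (v : ℝ) :
    (fun u => lowerTriangular F (u, v)) = (Ioi v).indicator (F · v) := by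
  ext u
  simp only [lowerTriangular, indicator_apply, mem_ofPred_eq, mem_Ioi, Function.uncurry_apply_pair]

theorem norm_lowerTriangular (p : ℝ × ℝ) :
    ‖lowerTriangular F p‖ = lowerTriangular (fun u v => ‖F u v‖) p :=
  norm_indicator_eq_indicator_norm _ p

theorem setIntegral_lowerTriangular_slice_fst {u : ℝ} (hu : u ∈ Icc a b) :
    ∫ v in Ioo a b, lowerTriangular F (u, v) = ∫ v in a..u, F u v := by
  rw [lowerTriangular_slice_fst, setIntegral_indicator measurableSet_Iio, Ioo_inter_Iio,
    min_eq_right hu.2, intervalIntegral.integral_of_le hu.1, integral_Ioc_eq_integral_Ioo]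

theorem setIntegral_lowerTriangular_slice_snd {v : ℝ} (hv : v ∈ Icc a b) :
    ∫ u in Ioo a b, lowerTriangular F (u, v) = ∫ u in v..b, F u v := by
  rw [lowerTriangular_slice_snd, setIntegral_indicator measurableSet_Ioi, inter_comm,
    Ioi_inter_Ioo, max_eq_left hv.1, intervalIntegral.integral_of_le hv.2,
    integral_Ioc_eq_integral_Ioo]

theorem integrableOn_lowerTriangular_slice_snd_iff {v : ℝ} (hv : v ∈ Icc a b) :
    IntegrableOn (fun u => lowerTriangular F (u, v)) (Ioo a b) ↔
      IntervalIntegrable (F · v) volume v b := by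
  rw [lowerTriangular_slice_snd, IntegrableOn, integrable_indicator_iff measurableSet_Ioi,
    IntegrableOn, Measure.restrict_restrict measurableSet_Ioi, Ioi_inter_Ioo, max_eq_left hv.1,
    ← IntegrableOn, intervalIntegrable_iff_integrableOn_Ioo_of_le hv.2]

theorem integrableOn_lowerTriangular
    (hF : ContinuousOn (Function.uncurry F) ({p | p.2 < p.1} ∩ Ioo a b ×ˢ Ioo a b))
    (hslice : ∀ v ∈ Ioo a b, IntervalIntegrable (F · v) volume v b)
    (hnorm : IntervalIntegrable (fun v => ∫ u in v..b, ‖F u v‖) volume a b) :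
    IntegrableOn (lowerTriangular F) (Ioo a b ×ˢ Ioo a b) := by
  have hS : MeasurableSet {p : ℝ × ℝ | p.2 < p.1} :=
    measurableSet_lt measurable_snd measurable_fst
  have hmeas : AEStronglyMeasurable (lowerTriangular F)
      ((volume.restrict (Ioo a b)).prod (volume.restrict (Ioo a b))) := by
    rw [Measure.prod_restrict, ← Measure.volume_eq_prod, lowerTriangular,
      aestronglyMeasurable_indicator_iff hS, Measure.restrict_restrict hS]
    exact hF.aestronglyMeasurable (hS.inter (measurableSet_Ioo.prod measurableSet_Ioo))
  rw [← integrable_restrict_prod_restrict_iff, integrable_prod_iff' hmeas]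
  constructor
  · filter_upwards [ae_restrict_mem measurableSet_Ioo] with v hv
    exact (integrableOn_lowerTriangular_slice_snd_iff (Ioo_subset_Icc_self hv)).2 (hslice v hv)
  · refine (hnorm.def'.mono_set (Ioo_subset_Ioc_self.trans Ioc_subset_uIoc)).congr_fun
      (fun v hv => ?_) measurableSet_Ioo
    simp only [norm_lowerTriangular]
    exact (setIntegral_lowerTriangular_slice_snd (F := fun u v => ‖F u v‖)
      (Ioo_subset_Icc_self hv)).symm

theorem intervalIntegrable_integral_of_integrableOn_lowerTriangular (hab : a ≤ b)
    (hF : IntegrableOn (lowerTriangular F) (Ioo a b ×ˢ Ioo a b)) :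
    IntervalIntegrable (fun u => ∫ v in a..u, F u v) volume a b := by
  rw [intervalIntegrable_iff_integrableOn_Ioo_of_le hab]
  have hinner : IntegrableOn (fun u => ∫ v in Ioo a b, lowerTriangular F (u, v)) (Ioo a b) :=
    (integrable_restrict_prod_restrict_iff.2 hF).integral_prod_left
  exact hinner.congr_fun
    (fun u hu => setIntegral_lowerTriangular_slice_fst (Ioo_subset_Icc_self hu)) measurableSet_Ioo

theorem integral_integral_swap_lowerTriangular (hab : a ≤ b)
    (hF : IntegrableOn (lowerTriangular F) (Ioo a b ×ˢ Ioo a b)) :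
    ∫ u in a..b, ∫ v in a..u, F u v = ∫ v in a..b, ∫ u in v..b, F u v := by
  simp only [intervalIntegral.integral_of_le hab, integral_Ioc_eq_integral_Ioo]
  calc ∫ u in Ioo a b, ∫ v in a..u, F u v
      = ∫ u in Ioo a b, ∫ v in Ioo a b, lowerTriangular F (u, v) :=
        setIntegral_congr_fun measurableSet_Ioo
          (fun u hu => (setIntegral_lowerTriangular_slice_fst (Ioo_subset_Icc_self hu)).symm)
    _ = ∫ v in Ioo a b, ∫ u in Ioo a b, lowerTriangular F (u, v) :=
        integral_integral_swap (integrable_restrict_prod_restrict_iff.2 hF)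
    _ = ∫ v in Ioo a b, ∫ u in v..b, F u v :=
        setIntegral_congr_fun measurableSet_Ioo
          (fun v hv => setIntegral_lowerTriangular_slice_snd (Ioo_subset_Icc_self hv))

end LowerTriangular

theorem integrableOn_lowerTriangular_abel {E₀ E : ℝ} (hE₀ : 0 < E₀) (h : E₀ ≤ E)
    {g : ℝ → ℝ} (hg : ContinuousOn g (Icc E₀ E)) :
    IntegrableOn (lowerTriangular fun u v => g v * (u * √(E - u) * √(u - v))⁻¹)
      (Ioo E₀ E ×ˢ Ioo E₀ E) := by
  refine integrableOn_lowerTriangular ?_ (fun v hv => ?_) ?_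
  · refine (hg.comp continuousOn_snd fun p hp => Ioo_subset_Icc_self hp.2.2).mul
      (ContinuousOn.inv₀ (by fun_prop) fun p hp => ?_)
    have := hE₀.trans hp.2.1.1
    have := sqrt_pos.2 (sub_pos.2 hp.2.1.2)
    have := sqrt_pos.2 (sub_pos.2 hp.1)
    positivity
  · exact (intervalIntegrable_inv_mul_sqrt_mul_sqrt (hE₀.trans hv.1) hv.2).const_mul (g v)
  · refine (ContinuousOn.intervalIntegrable (u := fun v => |g v| * (π / √(E * v))) ?_)
      |>.congr_uIoo fun v hv => ?_
    · rw [uIcc_of_le h]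
      refine hg.abs.mul (continuousOn_const.div (by fun_prop) fun v hv => ?_)
      have := hE₀.trans_le hv.1
      have := this.trans_le hv.2
      positivity
    · rw [uIoo_of_le h] at hv
      exact (integral_norm_mul_inv_mul_sqrt_mul_sqrt (hE₀.trans hv.1) hv.2 _).symm

/-- Abel double-integral identity with reciprocal weight:
`∫_{E₀}^{E} u⁻¹ (E−u)^{−1/2} ∫_{E₀}^{u} g(v) (u−v)^{−1/2} dv du
  = π ∫_{E₀}^{E} g(v) (E·v)^{−1/2} dv` for `0 < E₀ < E`. -/
theorem abel_double_integral_reciprocal_weight (E₀ E : ℝ) (hE₀ : 0 < E₀)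
    (h : E₀ < E) (g : ℝ → ℝ) (hg : ContinuousOn g (Icc E₀ E)) :
    (∀ u ∈ Ioc E₀ E,
      IntervalIntegrable (fun v => g v / Real.sqrt (u - v)) volume E₀ u) ∧
    IntervalIntegrable
      (fun u => (∫ v in E₀..u, g v / Real.sqrt (u - v)) / (u * Real.sqrt (E - u)))
      volume E₀ E ∧
    IntervalIntegrable (fun v => g v / Real.sqrt (E * v)) volume E₀ E ∧
    (∫ u in E₀..E, (∫ v in E₀..u, g v / Real.sqrt (u - v)) / (u * Real.sqrt (E - u)))
      = π * ∫ v in E₀..E, g v / Real.sqrt (E * v) := by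
  have hF := integrableOn_lowerTriangular_abel hE₀ h.le hg
  have hinner (u : ℝ) : ∫ v in E₀..u, g v * (u * √(E - u) * √(u - v))⁻¹
      = (∫ v in E₀..u, g v / √(u - v)) / (u * √(E - u)) := by
    rw [← intervalIntegral.integral_div]
    exact intervalIntegral.integral_congr fun v _ => by ring
  refine ⟨fun u hu => ?_, ?_, ?_, ?_⟩
  · simp only [div_eq_mul_inv]
    exact (intervalIntegrable_inv_sqrt_sub hu.1.le).continuousOn_mul
      (hg.mono (by rw [uIcc_of_le hu.1.le]; exact Icc_subset_Icc_right hu.2))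
  · simpa only [hinner] using intervalIntegrable_integral_of_integrableOn_lowerTriangular h.le hF
  · refine ContinuousOn.intervalIntegrable ?_
    rw [uIcc_of_le h.le]
    refine hg.div (by fun_prop) fun v hv => ?_
    have := hE₀.trans_le hv.1
    have := hE₀.trans h
    positivity
  · simp only [← hinner, integral_integral_swap_lowerTriangular h.le hF,
      ← intervalIntegral.integral_const_mul]
    refine intervalIntegral.integral_congr_Ioo_of_le h.le fun v hv => ?_
    rw [intervalIntegral.integral_const_mul, integral_inv_mul_sqrt_mul_sqrt (hE₀.trans hv.1) hv.2]
    ring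
end

section
/- Differentiation of the square-root Abel kernel: let 0 < E₀ and let g be continuous on [E₀, E₁] for some E₁ > E₀. Then the function F(E) = ∫_{E₀}^{E} √((E−u)/u) · g(u) du is differentiable on (E₀, E₁) with F′(E) = (1/2) ∫_{E₀}^{E} g(u) / √(u(E−u)) du. -/
/-!
Writing `√((e - u) / u) g u = √(e - u) (g u / √u)`, the integrand vanishes for `u ≥ e` (`√` is `0`
on negative reals), so near `E` the upper limit `e` may be frozen at `E₁`. The difference quotients
of `e ↦ √(e - u)` at `E` are bounded by `1 / √|E - u|`, which is integrable, so the derivative may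
be taken under the integral sign by dominated convergence.
-/

open Set MeasureTheory Filter Topology
open scoped Interval

section
variable {α 𝕜 E : Type*} [MeasurableSpace α] {μ : Measure α} [RCLike 𝕜]
  [NormedAddCommGroup E] [NormedSpace ℝ E] [NormedSpace 𝕜 E]

/-- Unlike `hasDerivAt_integral_of_dominated_loc_of_lip`, only a Lipschitz bound at `x₀` is
required, which is all that `√(e - u)` satisfies uniformly near `e = E`. -/
theorem hasDerivAt_integral_of_dominated_loc_of_lip' {F : 𝕜 → α → E} {F' : α → E} {x₀ : 𝕜}
    {bound : α → ℝ} {s : Set 𝕜} (hs : s ∈ 𝓝 x₀)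
    (hF_meas : ∀ x ∈ s, AEStronglyMeasurable (F x) μ) (hF_int : Integrable (F x₀) μ)
    (hF'_meas : AEStronglyMeasurable F' μ)
    (h_lipsch : ∀ᵐ a ∂μ, ∀ x ∈ s, ‖F x a - F x₀ a‖ ≤ bound a * ‖x - x₀‖)
    (bound_integrable : Integrable bound μ)
    (h_diff : ∀ᵐ a ∂μ, HasDerivAt (F · a) (F' a) x₀) :
    Integrable F' μ ∧ HasDerivAt (fun x ↦ ∫ a, F x a ∂μ) (∫ a, F' a ∂μ) x₀ := by
  set L : E →L[𝕜] 𝕜 →L[𝕜] E := ContinuousLinearMap.smulRightL 𝕜 𝕜 E 1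
  have hm : AEStronglyMeasurable (L ∘ F') μ := L.continuous.comp_aestronglyMeasurable hF'_meas
  obtain ⟨hLF'_int, key⟩ := hasFDerivAt_integral_of_dominated_loc_of_lip' hs hF_meas hF_int hm
    h_lipsch bound_integrable (h_diff.mono fun _ ha ↦ ha.hasFDerivAt)
  have hF'_int : Integrable F' μ := by
    rw [← integrable_norm_iff hm] at hLF'_int
    simpa [L, Function.comp_def, integrable_norm_iff hF'_meas] using hLF'_int
  refine ⟨hF'_int, ?_⟩
  by_cases hE : CompleteSpace E
  · rw [hasDerivAt_iff_hasFDerivAt]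
    simpa only [Function.comp_def, ContinuousLinearMap.integral_comp_comm _ hF'_int] using! key
  · simpa [integral, hE] using hasDerivAt_const x₀ (0 : E)
end

theorem Real.abs_sqrt_sub_sqrt_le (x : ℝ) {y : ℝ} (hy : y ≠ 0) :
    |√x - √y| ≤ (√|y|)⁻¹ * |x - y| := by
  have hr : 0 < √|y| := Real.sqrt_pos.2 (abs_pos.2 hy)
  rw [← div_eq_inv_mul, le_div_iff₀ hr]
  rcases hy.lt_or_gt with hy | hy <;> rcases le_or_gt x 0 with hx | hx
  · simp [Real.sqrt_eq_zero_of_nonpos hx, Real.sqrt_eq_zero_of_nonpos hy.le]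
  · rw [Real.sqrt_eq_zero_of_nonpos hy.le, abs_of_neg hy, sub_zero,
      abs_of_pos (by linarith : 0 < x - y), abs_of_nonneg (Real.sqrt_nonneg x)]
    nlinarith [Real.sq_sqrt hx.le, Real.sq_sqrt (neg_nonneg.2 hy.le), sq_nonneg (√x - √(-y))]
  · rw [Real.sqrt_eq_zero_of_nonpos hx, abs_of_pos hy, zero_sub, abs_neg,
      abs_of_nonneg (Real.sqrt_nonneg y), abs_of_neg (by linarith : x - y < 0)]
    nlinarith [Real.sq_sqrt hy.le]
  · rw [abs_of_pos hy]
    have hs : (√x - √y) * (√x + √y) = x - y := by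
      nlinarith [Real.sq_sqrt hx.le, Real.sq_sqrt hy.le]
    rw [← hs, abs_mul, abs_of_nonneg (by positivity : 0 ≤ √x + √y)]
    gcongr
    linarith [Real.sqrt_nonneg x]

theorem intervalIntegrable_inv_sqrt_abs (a b : ℝ) :
    IntervalIntegrable (fun x : ℝ ↦ (√|x|)⁻¹) volume a b := by
  have from_zero_of_nonneg : ∀ c, 0 ≤ c → IntervalIntegrable (fun x : ℝ ↦ (√|x|)⁻¹) volume 0 c := by
    intro c hc
    refine (intervalIntegral.intervalIntegrable_rpow' (r := -(1/2)) (by norm_num)).congr_uIoo ?_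
    intro x hx
    rw [uIoo_of_le hc] at hx
    simp [abs_of_pos hx.1, Real.sqrt_eq_rpow, Real.rpow_neg hx.1.le]
  have from_zero : ∀ c, IntervalIntegrable (fun x : ℝ ↦ (√|x|)⁻¹) volume 0 c := by
    intro c
    rcases le_total 0 c with hc | hc
    · exact from_zero_of_nonneg c hc
    · simpa using (from_zero_of_nonneg (-c) (neg_nonneg.2 hc)).comp_sub_left 0
  exact (from_zero a).symm.trans (from_zero b)

theorem intervalIntegral.integral_eq_integral_of_eqOn_zero {E : Type*} [NormedAddCommGroup E]
    [NormedSpace ℝ E] {μ : Measure ℝ} {f : ℝ → E} {a b c : ℝ}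
    (hab : IntervalIntegrable f μ a b) (hf : EqOn f 0 [[b, c]]) :
    ∫ x in a..c, f x ∂μ = ∫ x in a..b, f x ∂μ := by
  have hbc : IntervalIntegrable f μ b c := by
    rw [intervalIntegrable_iff]
    exact integrableOn_zero.congr_fun (hf.symm.mono uIoc_subset_uIcc) measurableSet_uIoc
  rw [← intervalIntegral.integral_add_adjacent_intervals hab hbc,
    intervalIntegral.integral_congr hf]
  simp

/-- For `u > E` the derivative's integrand is the junk value `h u / 0 = 0`, which is correct since
`√(e - u) = 0` for `e` near `E`. -/
theorem hasDerivAt_integral_sqrt_param_sub_mul {a b : ℝ} {h : ℝ → ℝ} (hab : a ≤ b)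
    (hh : ContinuousOn h (Icc a b)) (E : ℝ) :
    IntervalIntegrable (fun u ↦ h u / (2 * √(E - u))) volume a b ∧
      HasDerivAt (fun e ↦ ∫ u in a..b, √(e - u) * h u) (∫ u in a..b, h u / (2 * √(E - u))) E := by
  obtain ⟨M, hM⟩ := isCompact_Icc.exists_bound_of_continuousOn hh
  have hbound : IntervalIntegrable (fun u ↦ M * (√|E - u|)⁻¹) volume a b := by
    simpa using ((intervalIntegrable_inv_sqrt_abs (E - a) (E - b)).comp_sub_left E).const_mul M
  have hh_meas : AEStronglyMeasurable h (volume.restrict (Ioc a b)) :=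
    (hh.mono Ioc_subset_Icc_self).aestronglyMeasurable measurableSet_Ioc
  simp only [intervalIntegral.integral_of_le hab, intervalIntegrable_iff_integrableOn_Ioc_of_le hab]
    at hbound ⊢
  refine hasDerivAt_integral_of_dominated_loc_of_lip' univ_mem (fun e _ ↦ ?_) ?_ ?_ ?_ hbound ?_
  · exact (by fun_prop : Continuous fun u ↦ √(e - u)).aestronglyMeasurable.mul hh_meas
  · exact ((by fun_prop : Continuous fun u ↦ √(E - u)).continuousOn.mul hh).integrableOn_Icc
      |>.mono_set Ioc_subset_Icc_self
  · exact hh_meas.div₀ (by fun_prop : Continuous fun u ↦ 2 * √(E - u)).aestronglyMeasurable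
  · filter_upwards [ae_restrict_mem measurableSet_Ioc, ae_restrict_of_ae (Measure.ae_ne volume E)]
      with u hu hne e _
    have hsqrt := Real.abs_sqrt_sub_sqrt_le (e - u) (sub_ne_zero.2 hne.symm)
    rw [sub_sub_sub_cancel_right] at hsqrt
    calc ‖√(e - u) * h u - √(E - u) * h u‖ = |√(e - u) - √(E - u)| * ‖h u‖ := by
          rw [← sub_mul, norm_mul, Real.norm_eq_abs]
      _ ≤ ((√|E - u|)⁻¹ * |e - E|) * M := by gcongr; exact hM u (Ioc_subset_Icc_self hu)
      _ = M * (√|E - u|)⁻¹ * ‖e - E‖ := by rw [Real.norm_eq_abs]; ring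
  · filter_upwards [Measure.ae_ne _ E] with u hne
    exact (((Real.hasDerivAt_sqrt (sub_ne_zero.2 hne.symm)).comp E
      ((hasDerivAt_id E).sub_const u)).mul_const (h u)).congr_deriv (by ring)

theorem hasDerivAt_integral_sqrt_sub_mul {a b E : ℝ} {h : ℝ → ℝ}
    (hh : ContinuousOn h (Icc a b)) (hE : E ∈ Ioo a b) :
    HasDerivAt (fun e ↦ ∫ u in a..e, √(e - u) * h u) (∫ u in a..E, h u / (2 * √(E - u))) E := by
  obtain ⟨hint, hderiv⟩ := hasDerivAt_integral_sqrt_param_sub_mul (hE.1.trans hE.2).le hh E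
  have sqrt_sub_eq_zero : ∀ {e u : ℝ}, e ≤ b → u ∈ [[e, b]] → √(e - u) = 0 := fun he hu ↦
    Real.sqrt_eq_zero_of_nonpos (sub_nonpos.2 (uIcc_of_le he ▸ hu).1)
  have hupper : ∀ e ∈ Icc a b,
      ∫ u in a..e, √(e - u) * h u = ∫ u in a..b, √(e - u) * h u := fun e he ↦
    (intervalIntegral.integral_eq_integral_of_eqOn_zero
      (((by fun_prop : Continuous fun u ↦ √(e - u)).continuousOn.mul hh).mono
        (uIcc_subset_Icc ⟨le_rfl, he.1.trans he.2⟩ he)).intervalIntegrable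
      fun u hu ↦ by simp [sqrt_sub_eq_zero he.2 hu]).symm
  have hvalue : ∫ u in a..b, h u / (2 * √(E - u)) = ∫ u in a..E, h u / (2 * √(E - u)) :=
    intervalIntegral.integral_eq_integral_of_eqOn_zero
      (hint.mono_set (uIcc_subset_uIcc_left (Icc_subset_uIcc (Ioo_subset_Icc_self hE))))
      fun u hu ↦ by simp [sqrt_sub_eq_zero hE.2.le hu]
  rw [← hvalue]
  exact hderiv.congr_of_eventuallyEq
    (eventually_of_mem (Icc_mem_nhds hE.1 hE.2) hupper)

theorem deriv_sqrt_abel_kernel_general (E₀ E₁ : ℝ) (hE₀ : 0 < E₀)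
    (g : ℝ → ℝ) (hg : ContinuousOn g (Icc E₀ E₁)) :
    ∀ E ∈ Ioo E₀ E₁,
      HasDerivAt (fun e => ∫ u in E₀..e, Real.sqrt ((e - u) / u) * g u)
        ((1/2) * ∫ u in E₀..E, g u / Real.sqrt (u * (E - u))) E := by
  intro E hE
  have nonneg_of_mem : ∀ {e u : ℝ}, 0 < e → u ∈ [[E₀, e]] → 0 ≤ u := fun he hu ↦
    (le_min hE₀.le he.le).trans hu.1
  have hh : ContinuousOn (fun u ↦ g u / √u) (Icc E₀ E₁) :=
    hg.div Real.continuous_sqrt.continuousOn fun u hu ↦ (Real.sqrt_pos.2 (hE₀.trans_le hu.1)).ne'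
  have hkernel : (fun e ↦ ∫ u in E₀..e, √((e - u) / u) * g u) =ᶠ[𝓝 E]
      fun e ↦ ∫ u in E₀..e, √(e - u) * (g u / √u) := by
    filter_upwards [Ioi_mem_nhds (hE₀.trans hE.1)] with e he
    refine intervalIntegral.integral_congr fun u hu ↦ ?_
    simp only [Real.sqrt_div' _ (nonneg_of_mem he hu)]
    ring
  have hvalue : ∫ u in E₀..E, g u / √u / (2 * √(E - u)) =
      (1/2) * ∫ u in E₀..E, g u / √(u * (E - u)) := by
    rw [← intervalIntegral.integral_const_mul]
    refine intervalIntegral.integral_congr fun u hu ↦ ?_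
    simp only [Real.sqrt_mul (nonneg_of_mem (hE₀.trans hE.1) hu)]
    ring
  exact hvalue ▸ (hasDerivAt_integral_sqrt_sub_mul hh hE).congr_of_eventuallyEq hkernel

/-- Differentiation of the square-root Abel kernel:
`F(E) = ∫_{E₀}^E √((E−u)/u) g(u) du` has
`F′(E) = (1/2) ∫_{E₀}^E g(u)/√(u(E−u)) du`. -/
theorem deriv_sqrt_abel_kernel (E₀ E₁ : ℝ) (hE₀ : 0 < E₀) (hE : E₀ < E₁)
    (g : ℝ → ℝ) (hg : ContinuousOn g (Icc E₀ E₁)) :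
    ∀ E ∈ Ioo E₀ E₁,
      HasDerivAt (fun e => ∫ u in E₀..e, Real.sqrt ((e - u) / u) * g u)
        ((1/2) * ∫ u in E₀..E, g u / Real.sqrt (u * (E - u))) E :=
  deriv_sqrt_abel_kernel_general E₀ E₁ hE₀ g hg
end

section
/- Collapse of the double integral I₃: let 0 < E₀ < E and let Ψ be continuously differentiable on [E₀, E]. Then −36 ∫_{E₀}^{E} (E−u)^{−1/2} ( ∫_{E₀}^{u} arctan(√((u−v)/v)) Ψ′(v) dv ) du = 36π ∫_{E₀}^{E} (√v − √E) Ψ′(v) dv; equivalently, the left-hand side equals 36π ∫_{E₀}^{E} (v − √(E v)) Ψ′(v) v^{−1/2} dv. -/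
/-!
Swapping the order of integration over the triangle `E₀ ≤ v ≤ u ≤ E` (legitimate since the
integrand is dominated by `(π / 2) ‖Ψ'‖_∞ (E - u)^(-1/2)`) turns the left-hand side into
`-36 ∫_{E₀}^E Ψ'(v) (∫_v^E arctan √((u - v) / v) (E - u)^(-1/2) du) dv`, and the inner Abel-type
integral equals `π (√E - √v)`. For the latter, the explicit primitive `arctanKernelPrimitive`
vanishes at `u = v`, while as `u → E⁻` its two terms with `(u - v) / (E - u)` under the square
root tend to `√E π` and `√v π` and its last term to `0`.
-/

open Set MeasureTheory Real Filter Topology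

theorem intervalIntegral.integral_integral_swap_triangle {F : Type*} [NormedAddCommGroup F]
    [NormedSpace ℝ F] [CompleteSpace F] {f : ℝ → ℝ → F} {a b : ℝ} (hab : a ≤ b)
    (hf : Integrable (Function.uncurry f)
      ((volume.restrict (Ioc a b)).prod (volume.restrict (Ioc a b)))) :
    ∫ u in a..b, ∫ v in a..u, f u v = ∫ v in a..b, ∫ u in v..b, f u v := by
  set T : Set (ℝ × ℝ) := {p | p.2 ≤ p.1}
  have hT : MeasurableSet T := measurableSet_le measurable_snd measurable_fst
  have hleft : ∀ u ∈ Ioc a b,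
      ∫ v in a..u, f u v = ∫ v in Ioc a b, T.indicator (Function.uncurry f) (u, v) := by
    intro u hu
    have hind : ∀ v, T.indicator (Function.uncurry f) (u, v) = (Iic u).indicator (f u) v :=
      fun v => by simp only [indicator, T, mem_ofPred_eq, mem_Iic, Function.uncurry_apply_pair]
    simp_rw [hind, setIntegral_indicator measurableSet_Iic, Ioc_inter_Iic, min_eq_right hu.2,
      intervalIntegral.integral_of_le hu.1.le]
  have hright : ∀ v ∈ Ioc a b,
      ∫ u in v..b, f u v = ∫ u in Ioc a b, T.indicator (Function.uncurry f) (u, v) := by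
    intro v hv
    have hind : ∀ u, T.indicator (Function.uncurry f) (u, v) = (Ici v).indicator (f · v) u :=
      fun u => by simp only [indicator, T, mem_ofPred_eq, mem_Ici, Function.uncurry_apply_pair]
    have hIcc : Ioc a b ∩ Ici v = Icc v b := by
      ext u; simp only [mem_inter_iff, mem_Ioc, mem_Ici, mem_Icc]
      constructor
      · rintro ⟨⟨-, hub⟩, hvu⟩; exact ⟨hvu, hub⟩
      · rintro ⟨hvu, hub⟩; exact ⟨⟨hv.1.trans_le hvu, hub⟩, hvu⟩
    simp_rw [hind, setIntegral_indicator measurableSet_Ici, hIcc, integral_Icc_eq_integral_Ioc,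
      intervalIntegral.integral_of_le hv.2]
  rw [intervalIntegral.integral_of_le hab, intervalIntegral.integral_of_le hab,
    setIntegral_congr_fun measurableSet_Ioc hleft, setIntegral_congr_fun measurableSet_Ioc hright]
  exact integral_integral_swap (hf.indicator hT)

theorem HasDerivAt.arctan_sqrt {f : ℝ → ℝ} {f' x : ℝ} (hf : HasDerivAt f f' x) (hx : 0 < f x) :
    HasDerivAt (fun y => Real.arctan √(f y)) (f' / (2 * √(f x) * (1 + f x))) x := by
  convert (hf.sqrt hx.ne').arctan using 1
  rw [sq_sqrt hx.le]
  field_simp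

theorem abs_arctan_le_pi_div_two (x : ℝ) : |arctan x| ≤ π / 2 :=
  abs_le.2 ⟨(neg_pi_div_two_lt_arctan x).le, (arctan_lt_pi_div_two x).le⟩

theorem integrableOn_inv_sqrt_const_sub (a E : ℝ) :
    IntegrableOn (fun u => (√(E - u))⁻¹) (Ioc a E) := by
  have hrpow : IntervalIntegrable (fun x : ℝ => x ^ (-(1 / 2) : ℝ)) volume (E - a) (E - E) :=
    intervalIntegral.intervalIntegrable_rpow' (by norm_num)
  have hshift := (hrpow.comp_sub_left E).1
  rw [sub_sub_cancel, sub_self, sub_zero] at hshift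
  refine hshift.congr_fun (fun u hu => ?_) measurableSet_Ioc
  dsimp only
  rw [rpow_neg (sub_nonneg.2 hu.2), sqrt_eq_rpow]

noncomputable def arctanKernelPrimitive (v E u : ℝ) : ℝ :=
  2 * √E * arctan √(E / v * ((u - v) / (E - u))) - 2 * √v * arctan √((u - v) / (E - u))
    - 2 * √(E - u) * arctan √((u - v) / v)

theorem hasDerivAt_arctanKernelPrimitive {v E u : ℝ} (hv : 0 < v) (hu : u ∈ Ioo v E) :
    HasDerivAt (arctanKernelPrimitive v E) (arctan √((u - v) / v) / √(E - u)) u := by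
  obtain ⟨hvu, huE⟩ := hu
  have hE : 0 < E := by linarith
  have huv : 0 < u - v := sub_pos.2 hvu
  have hEu : 0 < E - u := sub_pos.2 huE
  have hr : HasDerivAt (fun u => (u - v) / (E - u)) ((E - v) / (E - u) ^ 2) u := by
    refine (((hasDerivAt_id u).sub_const v).div ((hasDerivAt_id u).const_sub E)
      hEu.ne').congr_deriv ?_
    simp only [id]; ring
  have hA := (HasDerivAt.arctan_sqrt (hr.const_mul (E / v))
    (by positivity)).const_mul (2 * √E)
  have hB := (hr.arctan_sqrt (div_pos huv hEu)).const_mul (2 * √v)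
  have hC := HasDerivAt.mul ((((hasDerivAt_id u).const_sub E).sqrt hEu.ne').const_mul 2)
    ((((hasDerivAt_id u).sub_const v).div_const v).arctan_sqrt (div_pos huv hv))
  refine ((hA.sub hB).sub hC).congr_deriv ?_
  simp only [id]
  have hsq : √(E / v * ((u - v) / (E - u))) = √E * √(u - v) / (√v * √(E - u)) := by
    rw [← mul_div_assoc, div_mul_eq_mul_div, div_div, sqrt_div (by positivity), sqrt_mul hE.le,
      sqrt_mul hv.le]
  rw [hsq, sqrt_div huv.le, sqrt_div huv.le]
  have hsEu : 0 < √(E - u) := sqrt_pos.2 hEu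
  have hsuv : 0 < √(u - v) := sqrt_pos.2 huv
  have hsv : 0 < √v := sqrt_pos.2 hv
  have hsE : 0 < √E := sqrt_pos.2 hE
  field_simp
  rw [sq_sqrt hEu.le]
  ring

theorem tendsto_arctanKernelPrimitive_nhdsGT {v E : ℝ} (hvE : v < E) :
    Tendsto (arctanKernelPrimitive v E) (𝓝[>] v) (𝓝 0) := by
  have hEv : E - v ≠ 0 := (sub_pos.2 hvE).ne'
  have hcont : ContinuousAt (arctanKernelPrimitive v E) v := by
    unfold arctanKernelPrimitive
    fun_prop (disch := assumption)
  simpa [arctanKernelPrimitive] using hcont.tendsto.mono_left nhdsWithin_le_nhds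

theorem tendsto_arctanKernelPrimitive_nhdsLT {v E : ℝ} (hv : 0 < v) (hvE : v < E) :
    Tendsto (arctanKernelPrimitive v E) (𝓝[<] E) (𝓝 (π * (√E - √v))) := by
  have harctan : ∀ {g : ℝ → ℝ}, Tendsto g (𝓝[<] E) atTop →
      Tendsto (fun u => arctan √(g u)) (𝓝[<] E) (𝓝 (π / 2)) := fun hg =>
    (tendsto_arctan_atTop.mono_right nhdsWithin_le_nhds).comp (tendsto_sqrt_atTop.comp hg)
  have hgap : Tendsto (fun u => E - u) (𝓝[<] E) (𝓝[>] 0) := by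
    refine tendsto_nhdsWithin_of_tendsto_nhds_of_eventually_within _ ?_ ?_
    · simpa using ((continuous_sub_left E).tendsto E).mono_left nhdsWithin_le_nhds
    · filter_upwards [self_mem_nhdsWithin] with u (hu : u < E) using sub_pos.2 hu
  have hratio : Tendsto (fun u => (u - v) / (E - u)) (𝓝[<] E) atTop := by
    have hnum : Tendsto (fun u => u - v) (𝓝[<] E) (𝓝 (E - v)) :=
      ((continuous_sub_right v).tendsto E).mono_left nhdsWithin_le_nhds
    simpa only [div_eq_mul_inv, Pi.inv_apply] using
      hnum.pos_mul_atTop (sub_pos.2 hvE) hgap.inv_tendsto_nhdsGT_zero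
  have hlast : Tendsto (fun u => 2 * √(E - u) * arctan √((u - v) / v)) (𝓝[<] E) (𝓝 0) := by
    have hcont : ContinuousAt (fun u => 2 * √(E - u) * arctan √((u - v) / v)) E := by fun_prop
    simpa using hcont.tendsto.mono_left nhdsWithin_le_nhds
  rw [show π * (√E - √v) = 2 * √E * (π / 2) - 2 * √v * (π / 2) - 0 by ring]
  exact (((harctan (hratio.const_mul_atTop (div_pos (hv.trans hvE) hv))).const_mul (2 * √E)).sub
    ((harctan hratio).const_mul (2 * √v))).sub hlast

theorem integral_arctan_sqrt_div_sqrt_sub {v E : ℝ} (hv : 0 < v) (hvE : v ≤ E) :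
    ∫ u in v..E, arctan √((u - v) / v) / √(E - u) = π * (√E - √v) := by
  rcases hvE.eq_or_lt with rfl | hvE
  · simp
  have hint : IntervalIntegrable (fun u => arctan √((u - v) / v) / √(E - u)) volume v E := by
    simp_rw [intervalIntegrable_iff_integrableOn_Ioc_of_le hvE.le, div_eq_mul_inv]
    exact (integrableOn_inv_sqrt_const_sub v E).bdd_mul (c := π / 2) (by fun_prop)
      (Eventually.of_forall fun u => abs_arctan_le_pi_div_two _)
  rw [intervalIntegral.integral_eq_sub_of_hasDerivAt_of_tendsto hvE
    (fun u hu => hasDerivAt_arctanKernelPrimitive hv hu) hint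
    (tendsto_arctanKernelPrimitive_nhdsGT hvE) (tendsto_arctanKernelPrimitive_nhdsLT hv hvE),
    sub_zero]

theorem integrable_arctan_sqrt_mul_div_sqrt_prod {E₀ E : ℝ} {g : ℝ → ℝ}
    (hg : ContinuousOn g (Icc E₀ E)) :
    Integrable (Function.uncurry fun u v => arctan √((u - v) / v) * g v / √(E - u))
      ((volume.restrict (Ioc E₀ E)).prod (volume.restrict (Ioc E₀ E))) := by
  obtain ⟨M, hM⟩ := isCompact_Icc.exists_bound_of_continuousOn hg
  have hweight : Integrable (fun p : ℝ × ℝ => (√(E - p.1))⁻¹)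
      ((volume.restrict (Ioc E₀ E)).prod (volume.restrict (Ioc E₀ E))) :=
    (integrableOn_inv_sqrt_const_sub E₀ E).comp_fst _
  have hkernel : Measurable fun p : ℝ × ℝ => arctan √((p.1 - p.2) / p.2) := by fun_prop
  have hmeas : AEStronglyMeasurable (fun p : ℝ × ℝ => arctan √((p.1 - p.2) / p.2) * g p.2)
      ((volume.restrict (Ioc E₀ E)).prod (volume.restrict (Ioc E₀ E))) :=
    hkernel.aestronglyMeasurable.mul
      ((hg.aestronglyMeasurable measurableSet_Icc).mono_set Ioc_subset_Icc_self).comp_snd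
  have hbound : ∀ᵐ p ∂(volume.restrict (Ioc E₀ E)).prod (volume.restrict (Ioc E₀ E)),
      ‖arctan √((p.1 - p.2) / p.2) * g p.2‖ ≤ π / 2 * M := by
    rw [Measure.prod_restrict]
    filter_upwards [ae_restrict_mem (measurableSet_Ioc.prod measurableSet_Ioc)] with p hp
    rw [norm_mul]
    exact mul_le_mul (abs_arctan_le_pi_div_two _) (hM _ (Ioc_subset_Icc_self hp.2))
      (norm_nonneg _) (by positivity)
  exact (hweight.bdd_mul hmeas hbound).congr (.of_forall fun p => (div_eq_mul_inv _ _).symm)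

theorem integral_integral_arctan_sqrt_div_sqrt_sub {E₀ E : ℝ} (hE₀ : 0 < E₀) (hE : E₀ ≤ E)
    {g : ℝ → ℝ} (hg : ContinuousOn g (Icc E₀ E)) :
    ∫ u in E₀..E, (∫ v in E₀..u, arctan √((u - v) / v) * g v) / √(E - u)
      = π * ∫ v in E₀..E, (√E - √v) * g v := by
  calc ∫ u in E₀..E, (∫ v in E₀..u, arctan √((u - v) / v) * g v) / √(E - u)
      = ∫ u in E₀..E, ∫ v in E₀..u, arctan √((u - v) / v) * g v / √(E - u) := by
        simp_rw [intervalIntegral.integral_div]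
    _ = ∫ v in E₀..E, ∫ u in v..E, arctan √((u - v) / v) * g v / √(E - u) :=
        intervalIntegral.integral_integral_swap_triangle hE
          (integrable_arctan_sqrt_mul_div_sqrt_prod hg)
    _ = ∫ v in E₀..E, π * ((√E - √v) * g v) := by
        refine intervalIntegral.integral_congr fun v hv => ?_
        rw [uIcc_of_le hE] at hv
        simp_rw [mul_div_right_comm _ (g v), intervalIntegral.integral_mul_const,
          integral_arctan_sqrt_div_sqrt_sub (hE₀.trans_le hv.1) hv.2, mul_assoc]
    _ = π * ∫ v in E₀..E, (√E - √v) * g v := intervalIntegral.integral_const_mul _ _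

theorem collapse_I3_general (E₀ E : ℝ) (hE₀ : 0 < E₀) (hE : E₀ < E)
    (Ψ' : ℝ → ℝ)
    (hΨ' : ContinuousOn Ψ' (Icc E₀ E)) :
    (-36 * ∫ u in E₀..E,
        (∫ v in E₀..u, Real.arctan (Real.sqrt ((u - v) / v)) * Ψ' v) / Real.sqrt (E - u))
      = 36 * π * ∫ v in E₀..E, (Real.sqrt v - Real.sqrt E) * Ψ' v ∧
    (-36 * ∫ u in E₀..E,
        (∫ v in E₀..u, Real.arctan (Real.sqrt ((u - v) / v)) * Ψ' v) / Real.sqrt (E - u))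
      = 36 * π * ∫ v in E₀..E, (v - Real.sqrt (E * v)) * Ψ' v / Real.sqrt v := by
  have hcollapse : (-36 * ∫ u in E₀..E, (∫ v in E₀..u, arctan √((u - v) / v) * Ψ' v) / √(E - u))
      = 36 * π * ∫ v in E₀..E, (√v - √E) * Ψ' v := by
    have hflip : ∫ v in E₀..E, (√E - √v) * Ψ' v = -∫ v in E₀..E, (√v - √E) * Ψ' v := by
      rw [← intervalIntegral.integral_neg]
      congr 1 with v
      ring
    rw [integral_integral_arctan_sqrt_div_sqrt_sub hE₀ hE.le hΨ', hflip]
    ring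
  refine ⟨hcollapse, hcollapse.trans ?_⟩
  congr 1
  refine intervalIntegral.integral_congr fun v hv => ?_
  have hv : 0 < v := hE₀.trans_le (uIcc_of_le hE.le ▸ hv).1
  rw [sqrt_mul' E hv.le, eq_div_iff (sqrt_pos.2 hv).ne']
  linear_combination Ψ' v * mul_self_sqrt hv.le

/-- Collapse of the double integral `I₃`:
`−36 ∫_{E₀}^E (E−u)^{−1/2} ∫_{E₀}^u arctan(√((u−v)/v)) Ψ′(v) dv du
  = 36π ∫_{E₀}^E (√v − √E) Ψ′(v) dv
  = 36π ∫_{E₀}^E (v − √(Ev)) Ψ′(v) v^{−1/2} dv`. -/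
theorem collapse_I3 (E₀ E : ℝ) (hE₀ : 0 < E₀) (hE : E₀ < E)
    (Ψ Ψ' : ℝ → ℝ)
    (hΨ : ∀ v ∈ Icc E₀ E, HasDerivWithinAt Ψ (Ψ' v) (Icc E₀ E) v)
    (hΨ' : ContinuousOn Ψ' (Icc E₀ E)) :
    (-36 * ∫ u in E₀..E,
        (∫ v in E₀..u, Real.arctan (Real.sqrt ((u - v) / v)) * Ψ' v) / Real.sqrt (E - u))
      = 36 * π * ∫ v in E₀..E, (Real.sqrt v - Real.sqrt E) * Ψ' v ∧
    (-36 * ∫ u in E₀..E,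
        (∫ v in E₀..u, Real.arctan (Real.sqrt ((u - v) / v)) * Ψ' v) / Real.sqrt (E - u))
      = 36 * π * ∫ v in E₀..E, (v - Real.sqrt (E * v)) * Ψ' v / Real.sqrt v :=
  collapse_I3_general E₀ E hE₀ hE Ψ' hΨ'
end

section
/- Third-derivative cascade for I₁: let 0 < E₀ and let Ψ be three times continuously differentiable on [E₀, ∞). Define I₁(E) = (π/2) ∫_{E₀}^{E} (v + E) ( 7Ψ′(v) − 2Ψ(v)/v ) v^{−1/2} dv. Then the function z ↦ I₁(z²) is three times differentiable on (√E₀, ∞) and (2/π) (d³/dz³) I₁(z²) = 112 z⁴ Ψ‴(z²) + 304 z² Ψ″(z²) + 80 Ψ′(z²). -/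
open Set Real

/-!
Splitting the kernel, `∫_{E₀}^e (v + e) q v dv = ∫_{E₀}^e v q v dv + e ∫_{E₀}^e q v dv` with
`q v = (7Ψ′(v) − 2Ψ(v)/v)/√v`, the fundamental theorem of calculus gives
`I₁′(e) = (π/2)(2e q(e) + B(e))`, `B(e) = ∫_{E₀}^e q`. In the variable `z = √e` the factor `√e`
in `q` becomes `z`, so `d/dz I₁(z²)` is an explicit expression in `Ψ(z²)`, `Ψ′(z²)` and `B(z²)`;
as `d/dz B(z²) = 2z q(z²)` is explicit as well, two more rounds of the product and chain rules
give the formula.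
-/

section Calculus

variable {g : ℝ → ℝ} {a e : ℝ}

theorem ContinuousOn.intervalIntegrable_Ici (hg : ContinuousOn g (Ici a)) (he : a ≤ e) :
    IntervalIntegrable g MeasureTheory.volume a e :=
  (hg.mono Icc_subset_Ici_self).intervalIntegrable_of_Icc he

theorem ContinuousOn.hasDerivAt_integral_Ici (hg : ContinuousOn g (Ici a)) (he : a < e) :
    HasDerivAt (fun x => ∫ v in a..x, g v) (g e) e :=
  intervalIntegral.integral_hasDerivAt_right (hg.intervalIntegrable_Ici he.le)
    ((hg.mono Ioi_subset_Ici_self).stronglyMeasurableAtFilter isOpen_Ioi e he)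
    (hg.continuousAt (Ici_mem_nhds he))

theorem ContinuousOn.hasDerivAt_integral_add_mul (hg : ContinuousOn g (Ici a)) (he : a < e) :
    HasDerivAt (fun x => ∫ v in a..x, (v + x) * g v) (2 * e * g e + ∫ v in a..e, g v) e := by
  have hvg : ContinuousOn (fun v => v * g v) (Ici a) := continuousOn_id.mul hg
  have hsplit : (fun x => ∫ v in a..x, (v + x) * g v) =ᶠ[nhds e]
      fun x => (∫ v in a..x, v * g v) + x * ∫ v in a..x, g v := by
    filter_upwards [Ioi_mem_nhds he] with x hx
    simp only [add_mul]
    rw [intervalIntegral.integral_add (hvg.intervalIntegrable_Ici hx.le)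
      ((hg.intervalIntegrable_Ici hx.le).const_mul x), intervalIntegral.integral_const_mul]
  have hderiv := (hvg.hasDerivAt_integral_Ici he).add
    ((hasDerivAt_id e).mul (hg.hasDerivAt_integral_Ici he))
  refine (hderiv.congr_of_eventuallyEq hsplit).congr_deriv ?_
  simp only [id_eq]
  ring

theorem hasDerivAt_deriv_of_isOpen {𝕜 F : Type*} [NontriviallyNormedField 𝕜]
    [NormedAddCommGroup F] [NormedSpace 𝕜 F] {f f' : 𝕜 → F} {f'' : F} {S : Set 𝕜} {z : 𝕜}
    (hS : IsOpen S) (hz : z ∈ S) (hf : ∀ w ∈ S, HasDerivAt f (f' w) w)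
    (hf' : HasDerivAt f' f'' z) : HasDerivAt (deriv f) f'' z :=
  hf'.congr_of_eventuallyEq <| Filter.mem_of_superset (hS.mem_nhds hz) fun w hw => (hf w hw).deriv

end Calculus

theorem HasDerivAt.comp_sq {G : ℝ → ℝ} {d z : ℝ} (hG : HasDerivAt G d (z ^ 2)) :
    HasDerivAt (fun w => G (w ^ 2)) (d * (2 * z)) z := by
  have hsq : HasDerivAt (fun w : ℝ => w ^ 2) (2 * z) z := by simpa using hasDerivAt_pow 2 z
  exact HasDerivAt.comp (h := fun w : ℝ => w ^ 2) z hG hsq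

noncomputable section Cascade

variable (Ψ Ψ' Ψ'' Ψ''' B : ℝ → ℝ)

def cascadeWeight (v : ℝ) : ℝ := (7 * Ψ' v - 2 * Ψ v / v) / √v

def cascadeD1 (z : ℝ) : ℝ := 28 * z ^ 2 * Ψ' (z ^ 2) - 8 * Ψ (z ^ 2) + 2 * z * B (z ^ 2)

def cascadeD2 (z : ℝ) : ℝ :=
  56 * z ^ 3 * Ψ'' (z ^ 2) + 68 * z * Ψ' (z ^ 2) - 8 * Ψ (z ^ 2) / z + 2 * B (z ^ 2)

variable {Ψ Ψ' Ψ'' Ψ''' B} {a z : ℝ}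

theorem continuousOn_cascadeWeight (ha : 0 < a) (hΨ : ContinuousOn Ψ (Ici a))
    (hΨ' : ContinuousOn Ψ' (Ici a)) : ContinuousOn (cascadeWeight Ψ Ψ') (Ici a) := by
  have hpos : ∀ v ∈ Ici a, 0 < v := fun v hv => ha.trans_le hv
  exact ((continuousOn_const.mul hΨ').sub ((continuousOn_const.mul hΨ).div continuousOn_id
    fun v hv => (hpos v hv).ne')).div continuous_sqrt.continuousOn
    fun v hv => (sqrt_pos.mpr (hpos v hv)).ne'

theorem cascadeWeight_sq (hz : 0 ≤ z) :
    cascadeWeight Ψ Ψ' (z ^ 2) = (7 * Ψ' (z ^ 2) - 2 * Ψ (z ^ 2) / z ^ 2) / z := by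
  rw [cascadeWeight, sqrt_sq hz]

theorem hasDerivAt_integral_cascadeWeight_sq (hz : 0 < z) (ha : a < z ^ 2)
    (hg : ContinuousOn (cascadeWeight Ψ Ψ') (Ici a)) :
    HasDerivAt (fun w => ∫ v in a..w ^ 2, (v + w ^ 2) * cascadeWeight Ψ Ψ' v)
      (cascadeD1 Ψ Ψ' (fun e => ∫ v in a..e, cascadeWeight Ψ Ψ' v) z) z := by
  refine (hg.hasDerivAt_integral_add_mul ha).comp_sq.congr_deriv ?_
  rw [cascadeD1, cascadeWeight_sq hz.le]
  field_simp
  ring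

theorem hasDerivAt_cascadeD1 (hz : 0 < z) (hΨ : HasDerivAt Ψ (Ψ' (z ^ 2)) (z ^ 2))
    (hΨ' : HasDerivAt Ψ' (Ψ'' (z ^ 2)) (z ^ 2))
    (hB : HasDerivAt B ((7 * Ψ' (z ^ 2) - 2 * Ψ (z ^ 2) / z ^ 2) / z) (z ^ 2)) :
    HasDerivAt (cascadeD1 Ψ Ψ' B) (cascadeD2 Ψ Ψ' Ψ'' B z) z := by
  have h := ((((hasDerivAt_pow 2 z).const_mul 28).mul hΨ'.comp_sq).sub
    (hΨ.comp_sq.const_mul 8)).add (((hasDerivAt_id z).const_mul 2).mul hB.comp_sq)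
  refine h.congr_deriv ?_
  rw [cascadeD2]
  simp only [id_eq]
  field_simp
  ring

theorem hasDerivAt_cascadeD2 (hz : 0 < z) (hΨ : HasDerivAt Ψ (Ψ' (z ^ 2)) (z ^ 2))
    (hΨ' : HasDerivAt Ψ' (Ψ'' (z ^ 2)) (z ^ 2)) (hΨ'' : HasDerivAt Ψ'' (Ψ''' (z ^ 2)) (z ^ 2))
    (hB : HasDerivAt B ((7 * Ψ' (z ^ 2) - 2 * Ψ (z ^ 2) / z ^ 2) / z) (z ^ 2)) :
    HasDerivAt (cascadeD2 Ψ Ψ' Ψ'' B)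
      (112 * z ^ 4 * Ψ''' (z ^ 2) + 304 * z ^ 2 * Ψ'' (z ^ 2) + 80 * Ψ' (z ^ 2)) z := by
  have h := (((((hasDerivAt_pow 3 z).const_mul 56).mul hΨ''.comp_sq).add
    (((hasDerivAt_id z).const_mul 68).mul hΨ'.comp_sq)).sub
    ((hΨ.comp_sq.const_mul 8).div (hasDerivAt_id z) hz.ne')).add (hB.comp_sq.const_mul 2)
  refine h.congr_deriv ?_
  simp only [id_eq]
  field_simp
  ring

end Cascade

theorem cascade_I1_general (E₀ : ℝ) (hE₀ : 0 < E₀)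
    (Ψ Ψ' Ψ'' Ψ''' : ℝ → ℝ)
    (h1 : ∀ v ∈ Ici E₀, HasDerivWithinAt Ψ (Ψ' v) (Ici E₀) v)
    (h2 : ∀ v ∈ Ici E₀, HasDerivWithinAt Ψ' (Ψ'' v) (Ici E₀) v)
    (h3 : ∀ v ∈ Ici E₀, HasDerivWithinAt Ψ'' (Ψ''' v) (Ici E₀) v)
    (I₁ : ℝ → ℝ)
    (hI : ∀ e, I₁ e =
      (π/2) * ∫ v in E₀..e, (v + e) * (7 * Ψ' v - 2 * Ψ v / v) / Real.sqrt v) :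
    (∀ z ∈ Ioi (Real.sqrt E₀),
      DifferentiableAt ℝ (fun z => I₁ (z^2)) z ∧
      DifferentiableAt ℝ (deriv (fun z => I₁ (z^2))) z ∧
      DifferentiableAt ℝ (deriv (deriv (fun z => I₁ (z^2)))) z) ∧
    (∀ z ∈ Ioi (Real.sqrt E₀),
      (2/π) * deriv (deriv (deriv (fun z => I₁ (z^2)))) z =
        112 * z^4 * Ψ''' (z^2) + 304 * z^2 * Ψ'' (z^2) + 80 * Ψ' (z^2)) := by
  have hg := continuousOn_cascadeWeight hE₀ (fun v hv => (h1 v hv).continuousWithinAt)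
    fun v hv => (h2 v hv).continuousWithinAt
  set B := fun e => ∫ v in E₀..e, cascadeWeight Ψ Ψ' v
  have hS : ∀ z ∈ Ioi √E₀, 0 < z ∧ E₀ < z ^ 2 := fun z hz =>
    ⟨(sqrt_nonneg E₀).trans_lt hz, lt_sq_of_sqrt_lt hz⟩
  have interior {f f' : ℝ → ℝ} (h : ∀ v ∈ Ici E₀, HasDerivWithinAt f (f' v) (Ici E₀) v)
      {z : ℝ} (hz : z ∈ Ioi √E₀) : HasDerivAt f (f' (z ^ 2)) (z ^ 2) :=
    (h _ (hS z hz).2.le).hasDerivAt (Ici_mem_nhds (hS z hz).2)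
  have hB : ∀ z ∈ Ioi √E₀,
      HasDerivAt B ((7 * Ψ' (z ^ 2) - 2 * Ψ (z ^ 2) / z ^ 2) / z) (z ^ 2) := fun z hz =>
    cascadeWeight_sq (hS z hz).1.le ▸ hg.hasDerivAt_integral_Ici (hS z hz).2
  have hI₁ : (fun z => I₁ (z ^ 2)) =
      fun z => π / 2 * ∫ v in E₀..z ^ 2, (v + z ^ 2) * cascadeWeight Ψ Ψ' v := by
    simp only [hI, cascadeWeight, mul_div_assoc]
  have hd1 : ∀ z ∈ Ioi √E₀, HasDerivAt (fun z => I₁ (z ^ 2)) (π / 2 * cascadeD1 Ψ Ψ' B z) z :=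
    fun z hz => hI₁ ▸ (hasDerivAt_integral_cascadeWeight_sq (hS z hz).1 (hS z hz).2 hg).const_mul _
  have hd2 : ∀ z ∈ Ioi √E₀, HasDerivAt (deriv fun z => I₁ (z ^ 2))
      (π / 2 * cascadeD2 Ψ Ψ' Ψ'' B z) z := fun z hz =>
    hasDerivAt_deriv_of_isOpen isOpen_Ioi hz hd1 <|
      (hasDerivAt_cascadeD1 (hS z hz).1 (interior h1 hz) (interior h2 hz) (hB z hz)).const_mul _
  have hd3 : ∀ z ∈ Ioi √E₀, HasDerivAt (deriv (deriv fun z => I₁ (z ^ 2)))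
      (π / 2 * (112 * z ^ 4 * Ψ''' (z ^ 2) + 304 * z ^ 2 * Ψ'' (z ^ 2) + 80 * Ψ' (z ^ 2))) z :=
    fun z hz => hasDerivAt_deriv_of_isOpen isOpen_Ioi hz hd2 <|
      (hasDerivAt_cascadeD2 (hS z hz).1 (interior h1 hz) (interior h2 hz)
        (interior h3 hz) (hB z hz)).const_mul _
  refine ⟨fun z hz => ⟨(hd1 z hz).differentiableAt, (hd2 z hz).differentiableAt,
    (hd3 z hz).differentiableAt⟩, fun z hz => ?_⟩
  rw [(hd3 z hz).deriv]
  field_simp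

/-- Third-derivative cascade for `I₁`:
with `I₁(E) = (π/2) ∫_{E₀}^E (v+E)(7Ψ′(v) − 2Ψ(v)/v) v^{−1/2} dv`, the function
`z ↦ I₁(z²)` is three times differentiable on `(√E₀, ∞)` and
`(2/π) d³/dz³ I₁(z²) = 112 z⁴ Ψ‴(z²) + 304 z² Ψ″(z²) + 80 Ψ′(z²)`. -/
theorem cascade_I1 (E₀ : ℝ) (hE₀ : 0 < E₀)
    (Ψ Ψ' Ψ'' Ψ''' : ℝ → ℝ)
    (h1 : ∀ v ∈ Ici E₀, HasDerivWithinAt Ψ (Ψ' v) (Ici E₀) v)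
    (h2 : ∀ v ∈ Ici E₀, HasDerivWithinAt Ψ' (Ψ'' v) (Ici E₀) v)
    (h3 : ∀ v ∈ Ici E₀, HasDerivWithinAt Ψ'' (Ψ''' v) (Ici E₀) v)
    (hc : ContinuousOn Ψ''' (Ici E₀))
    (I₁ : ℝ → ℝ)
    (hI : ∀ e, I₁ e =
      (π/2) * ∫ v in E₀..e, (v + e) * (7 * Ψ' v - 2 * Ψ v / v) / Real.sqrt v) :
    (∀ z ∈ Ioi (Real.sqrt E₀),
      DifferentiableAt ℝ (fun z => I₁ (z^2)) z ∧
      DifferentiableAt ℝ (deriv (fun z => I₁ (z^2))) z ∧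
      DifferentiableAt ℝ (deriv (deriv (fun z => I₁ (z^2)))) z) ∧
    (∀ z ∈ Ioi (Real.sqrt E₀),
      (2/π) * deriv (deriv (deriv (fun z => I₁ (z^2)))) z =
        112 * z^4 * Ψ''' (z^2) + 304 * z^2 * Ψ'' (z^2) + 80 * Ψ' (z^2)) :=
  cascade_I1_general E₀ hE₀ Ψ Ψ' Ψ'' Ψ''' h1 h2 h3 I₁ hI
end

section
/- Third-derivative cascade for I₂: let 0 < E₀ and let Ψ be three times continuously differentiable on [E₀, ∞). Define I₂(E) = π ∫_{E₀}^{E} ( −6vΨ′(v) + 2Ψ(v) ) v^{−1/2} dv. Then the function z ↦ I₂(z²) is three times differentiable on (√E₀, ∞) and (2/π) (d³/dz³) I₂(z²) = −96 z⁴ Ψ‴(z²) − 208 z² Ψ″(z²) − 32 Ψ′(z²). -/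
open Set Real

/-- Third-derivative cascade for `I₂`:
with `I₂(E) = π ∫_{E₀}^E (−6vΨ′(v) + 2Ψ(v)) v^{−1/2} dv`, the function
`z ↦ I₂(z²)` is three times differentiable on `(√E₀, ∞)` and
`(2/π) d³/dz³ I₂(z²) = −96 z⁴ Ψ‴(z²) − 208 z² Ψ″(z²) − 32 Ψ′(z²)`. -/
theorem cascade_I2 (E₀ : ℝ) (hE₀ : 0 < E₀)
    (Ψ Ψ' Ψ'' Ψ''' : ℝ → ℝ)
    (h1 : ∀ v ∈ Ici E₀, HasDerivWithinAt Ψ (Ψ' v) (Ici E₀) v)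
    (h2 : ∀ v ∈ Ici E₀, HasDerivWithinAt Ψ' (Ψ'' v) (Ici E₀) v)
    (h3 : ∀ v ∈ Ici E₀, HasDerivWithinAt Ψ'' (Ψ''' v) (Ici E₀) v)
    (hc : ContinuousOn Ψ''' (Ici E₀))
    (I₂ : ℝ → ℝ)
    (hI : ∀ e, I₂ e =
      π * ∫ v in E₀..e, (-6 * v * Ψ' v + 2 * Ψ v) / Real.sqrt v) :
    (∀ z ∈ Ioi (Real.sqrt E₀),
      DifferentiableAt ℝ (fun z => I₂ (z^2)) z ∧
      DifferentiableAt ℝ (deriv (fun z => I₂ (z^2))) z ∧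
      DifferentiableAt ℝ (deriv (deriv (fun z => I₂ (z^2)))) z) ∧
    (∀ z ∈ Ioi (Real.sqrt E₀),
      (2/π) * deriv (deriv (deriv (fun z => I₂ (z^2)))) z =
        -96 * z^4 * Ψ''' (z^2) - 208 * z^2 * Ψ'' (z^2) - 32 * Ψ' (z^2)) := by
  have hs : IsOpen (Ioi (Real.sqrt E₀)) := isOpen_Ioi
  have hsq : ∀ z ∈ Ioi (Real.sqrt E₀), E₀ < z ^ 2 := by
    intro z hz
    have h0 : (0:ℝ) ≤ Real.sqrt E₀ := Real.sqrt_nonneg _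
    have h : Real.sqrt E₀ ^ 2 < z ^ 2 :=
      pow_lt_pow_left₀ (hz : Real.sqrt E₀ < z) h0 (by norm_num)
    simpa [Real.sq_sqrt hE₀.le] using h
  have hzpos : ∀ z ∈ Ioi (Real.sqrt E₀), 0 < z := by
    intro z hz
    exact lt_of_le_of_lt (Real.sqrt_nonneg _) hz
  have hΨc : ContinuousOn Ψ (Ici E₀) := fun v hv => (h1 v hv).continuousWithinAt
  have hΨ'c : ContinuousOn Ψ' (Ici E₀) := fun v hv => (h2 v hv).continuousWithinAt
  set g : ℝ → ℝ := fun v => (-6 * v * Ψ' v + 2 * Ψ v) / Real.sqrt v with hg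
  have hgc : ContinuousOn g (Ici E₀) := by
    apply ContinuousOn.div
    · exact ((continuousOn_const.mul continuousOn_id).mul hΨ'c).add
        (continuousOn_const.mul hΨc)
    · exact Real.continuous_sqrt.continuousOn
    · intro v hv
      exact (Real.sqrt_pos.mpr (lt_of_lt_of_le hE₀ hv)).ne'
  have hF : ∀ u, E₀ < u → HasDerivAt (fun w => ∫ v in E₀..w, g v) (g u) u := by
    intro u hu
    have hsub : Set.uIcc E₀ u ⊆ Ici E₀ := by
      rw [Set.uIcc_of_le hu.le]; exact Icc_subset_Ici_self
    have hint : IntervalIntegrable g MeasureTheory.volume E₀ u :=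
      (hgc.mono hsub).intervalIntegrable
    have hcont : ContinuousAt g u := hgc.continuousAt (Ici_mem_nhds hu)
    have hmeas : StronglyMeasurableAtFilter g (nhds u) MeasureTheory.volume :=
      ContinuousOn.stronglyMeasurableAtFilter isOpen_Ioi
        (hgc.mono Ioi_subset_Ici_self) u hu
    exact intervalIntegral.integral_hasDerivAt_right hint hmeas hcont
  have hderiv : ∀ x, E₀ < x → HasDerivAt Ψ (Ψ' x) x ∧ HasDerivAt Ψ' (Ψ'' x) x ∧
      HasDerivAt Ψ'' (Ψ''' x) x := by
    intro x hx
    have hmem : Ici E₀ ∈ nhds x := Ici_mem_nhds hx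
    exact ⟨(h1 x hx.le).hasDerivAt hmem, (h2 x hx.le).hasDerivAt hmem,
      (h3 x hx.le).hasDerivAt hmem⟩
  have hpow2 : ∀ z : ℝ, HasDerivAt (fun z : ℝ => z^2) (2*z) z := by
    intro z; simpa using hasDerivAt_pow 2 z
  have hA : ∀ z ∈ Ioi (Real.sqrt E₀), HasDerivAt (fun z => I₂ (z^2))
      (π * (-12*z^2*Ψ' (z^2) + 4*Ψ (z^2))) z := by
    intro z hz
    have hu := hsq z hz
    have h0 := hzpos z hz
    have hFz := hF (z^2) hu
    have hcomp := (HasDerivAt.comp (h := fun y : ℝ => y^2) z hFz (hpow2 z)).const_mul π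
    have heq : (fun z => I₂ (z^2)) = fun z : ℝ => π * ∫ v in E₀..z^2, g v := by
      funext w; rw [hI]
    rw [heq]
    refine hcomp.congr_deriv ?_
    have hsqrt : Real.sqrt (z^2) = z := Real.sqrt_sq h0.le
    rw [hg]
    simp only [hsqrt]
    field_simp
    ring
  have hB : ∀ z ∈ Ioi (Real.sqrt E₀),
      HasDerivAt (fun z => π * (-12*z^2*Ψ' (z^2) + 4*Ψ (z^2)))
        (π * (-24*z^3*Ψ'' (z^2) - 16*z*Ψ' (z^2))) z := by
    intro z hz
    obtain ⟨hΨd, hΨ'd, _⟩ := hderiv (z^2) (hsq z hz)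
    have d1 : HasDerivAt (fun z : ℝ => Ψ' (z^2)) (Ψ'' (z^2) * (2*z)) z :=
      HasDerivAt.comp (h := fun y : ℝ => y^2) z hΨ'd (hpow2 z)
    have d0 : HasDerivAt (fun z : ℝ => Ψ (z^2)) (Ψ' (z^2) * (2*z)) z :=
      HasDerivAt.comp (h := fun y : ℝ => y^2) z hΨd (hpow2 z)
    have h := ((((hpow2 z).const_mul (-12 : ℝ)).mul d1).add (d0.const_mul 4)).const_mul π
    exact h.congr_deriv (by ring)
  have hC : ∀ z ∈ Ioi (Real.sqrt E₀),
      HasDerivAt (fun z => π * (-24*z^3*Ψ'' (z^2) - 16*z*Ψ' (z^2)))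
        (π * (-48*z^4*Ψ''' (z^2) - 104*z^2*Ψ'' (z^2) - 16*Ψ' (z^2))) z := by
    intro z hz
    obtain ⟨_, hΨ'd, hΨ''d⟩ := hderiv (z^2) (hsq z hz)
    have d2 : HasDerivAt (fun z : ℝ => Ψ'' (z^2)) (Ψ''' (z^2) * (2*z)) z :=
      HasDerivAt.comp (h := fun y : ℝ => y^2) z hΨ''d (hpow2 z)
    have d1 : HasDerivAt (fun z : ℝ => Ψ' (z^2)) (Ψ'' (z^2) * (2*z)) z :=
      HasDerivAt.comp (h := fun y : ℝ => y^2) z hΨ'd (hpow2 z)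
    have hp3 : HasDerivAt (fun z : ℝ => z^3) (3*z^2) z := by
      simpa using hasDerivAt_pow 3 z
    have h := (((hp3.const_mul (-24 : ℝ)).mul d2).sub
      (((hasDerivAt_id' (x := z)).const_mul (16 : ℝ)).mul d1)).const_mul π
    exact h.congr_deriv (by ring)
  have hd1 : ∀ z ∈ Ioi (Real.sqrt E₀), deriv (fun z => I₂ (z^2)) z =
      π * (-12*z^2*Ψ' (z^2) + 4*Ψ (z^2)) := fun z hz => (hA z hz).deriv
  have hev1 : ∀ z ∈ Ioi (Real.sqrt E₀), deriv (fun z => I₂ (z^2)) =ᶠ[nhds z]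
      (fun z => π * (-12*z^2*Ψ' (z^2) + 4*Ψ (z^2))) := by
    intro z hz
    exact Filter.eventuallyEq_of_mem (hs.mem_nhds hz) (fun w hw => hd1 w hw)
  have hd2 : ∀ z ∈ Ioi (Real.sqrt E₀), deriv (deriv (fun z => I₂ (z^2))) z =
      π * (-24*z^3*Ψ'' (z^2) - 16*z*Ψ' (z^2)) := by
    intro z hz
    rw [Filter.EventuallyEq.deriv_eq (hev1 z hz)]
    exact (hB z hz).deriv
  have hev2 : ∀ z ∈ Ioi (Real.sqrt E₀), deriv (deriv (fun z => I₂ (z^2))) =ᶠ[nhds z]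
      (fun z => π * (-24*z^3*Ψ'' (z^2) - 16*z*Ψ' (z^2))) := by
    intro z hz
    exact Filter.eventuallyEq_of_mem (hs.mem_nhds hz) (fun w hw => hd2 w hw)
  have hd3 : ∀ z ∈ Ioi (Real.sqrt E₀), deriv (deriv (deriv (fun z => I₂ (z^2)))) z =
      π * (-48*z^4*Ψ''' (z^2) - 104*z^2*Ψ'' (z^2) - 16*Ψ' (z^2)) := by
    intro z hz
    rw [Filter.EventuallyEq.deriv_eq (hev2 z hz)]
    exact (hC z hz).deriv
  constructor
  · intro z hz
    refine ⟨(hA z hz).differentiableAt, ?_, ?_⟩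
    · exact (Filter.EventuallyEq.differentiableAt_iff (hev1 z hz)).mpr
        (hB z hz).differentiableAt
    · exact (Filter.EventuallyEq.differentiableAt_iff (hev2 z hz)).mpr
        (hC z hz).differentiableAt
  · intro z hz
    rw [hd3 z hz]
    have hπ : (π : ℝ) ≠ 0 := Real.pi_ne_zero
    field_simp
    ring
end

section
/- Third-derivative cascade for I₃: let 0 < E₀ and let Ψ be three times continuously differentiable on [E₀, ∞). Define I₃(E) = 36π ∫_{E₀}^{E} ( v − √(E v) ) Ψ′(v) v^{−1/2} dv = 36π ∫_{E₀}^{E} (√v − √E) Ψ′(v) dv. Then the function z ↦ I₃(z²) is three times differentiable on (√E₀, ∞) and (2/π) (d³/dz³) I₃(z²) = −288 z² Ψ″(z²) − 144 Ψ′(z²). -/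
/-!
Since `√(e v) / √v = √e`, the integrand of `I₃` is `(√v − √e) Ψ′(v)`. For `z > √E₀` and
`e = z²`, integrating the `z`-part gives
`I₃(z²) = 36π (∫_{E₀}^{z²} √v Ψ′(v) dv − z (Ψ(z²) − Ψ(E₀)))`, whose `z`-derivative
collapses to `36π (Ψ(E₀) − Ψ(z²))` because the two `2 z² Ψ′(z²)` terms cancel. Two further
chain-rule steps give the third derivative.
-/

open Set Real

lemma sub_sqrt_mul_mul_div_sqrt {v e : ℝ} (hv : 0 < v) (he : 0 ≤ e) (a : ℝ) :
    (v - √(e * v)) * a / √v = (√v - √e) * a := by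
  have hsq : √v * √v = v := mul_self_sqrt hv.le
  rw [sqrt_mul he, div_eq_iff (sqrt_pos.mpr hv).ne']
  linear_combination (-a) * hsq

lemma HasDerivWithinAt.hasDerivAt_comp_sq {f : ℝ → ℝ} {f' a z : ℝ}
    (hf : HasDerivWithinAt f f' (Ici a) (z ^ 2)) (hz : a < z ^ 2) :
    HasDerivAt (fun w => f (w ^ 2)) (f' * (2 * z)) z := by
  have hsq : HasDerivAt (fun w : ℝ => w ^ 2) (2 * z) z := by simpa using hasDerivAt_pow 2 z
  exact HasDerivAt.comp (h₂ := f) (h := fun w => w ^ 2) z (hf.hasDerivAt (Ici_mem_nhds hz)) hsq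

lemma hasDerivAt_deriv_of_isOpen_s16 {f g : ℝ → ℝ} {s : Set ℝ} {g' x : ℝ} (hs : IsOpen s)
    (hf : ∀ y ∈ s, HasDerivAt f (g y) y) (hx : x ∈ s) (hg : HasDerivAt g g' x) :
    HasDerivAt (deriv f) g' x :=
  hg.congr_of_eventuallyEq <|
    Filter.eventuallyEq_of_mem (hs.mem_nhds hx) fun y hy => (hf y hy).deriv

lemma ContinuousOn.sqrt_mul {f : ℝ → ℝ} {s : Set ℝ} (hf : ContinuousOn f s) :
    ContinuousOn (fun v => √v * f v) s :=
  continuousOn_id.sqrt.mul hf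

namespace intervalIntegral

lemma hasDerivAt_integral_of_continuousOn_Ici {g : ℝ → ℝ} {a b : ℝ}
    (hg : ContinuousOn g (Ici a)) (hb : a < b) :
    HasDerivAt (fun x => ∫ v in a..x, g v) (g b) b :=
  integral_hasDerivAt_right
    ((hg.mono (uIcc_of_le hb.le ▸ Icc_subset_Ici_self)).intervalIntegrable)
    (hg.mono Ioi_subset_Ici_self |>.stronglyMeasurableAtFilter isOpen_Ioi b hb)
    ((hg b hb.le).continuousAt (Ici_mem_nhds hb))

variable {f f' : ℝ → ℝ} {a b : ℝ}

lemma integral_eq_sub_of_hasDerivWithinAt_Ici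
    (hf : ∀ v ∈ Ici a, HasDerivWithinAt f (f' v) (Ici a) v) (hf' : ContinuousOn f' (Ici a))
    (hab : a ≤ b) : ∫ v in a..b, f' v = f b - f a :=
  integral_eq_sub_of_hasDerivAt_of_le hab
    (fun v hv => (hf v (Icc_subset_Ici_self hv)).continuousWithinAt.mono Icc_subset_Ici_self)
    (fun v hv => (hf v (le_of_lt hv.1)).hasDerivAt (Ici_mem_nhds hv.1))
    ((hf'.mono (uIcc_of_le hab ▸ Icc_subset_Ici_self)).intervalIntegrable)

lemma integral_sqrt_sub_mul
    (hf : ∀ v ∈ Ici a, HasDerivWithinAt f (f' v) (Ici a) v) (hf' : ContinuousOn f' (Ici a))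
    (hab : a ≤ b) (c : ℝ) :
    ∫ v in a..b, (√v - c) * f' v = (∫ v in a..b, √v * f' v) - c * (f b - f a) := by
  have hsub : uIcc a b ⊆ Ici a := uIcc_of_le hab ▸ Icc_subset_Ici_self
  simp_rw [sub_mul]
  rw [integral_sub (hf'.sqrt_mul.mono hsub).intervalIntegrable
      ((hf'.mono hsub).intervalIntegrable.const_mul c), integral_const_mul,
    integral_eq_sub_of_hasDerivWithinAt_Ici hf hf' hab]

lemma hasDerivAt_integral_sq_sqrt_sub_mul
    (hf : ∀ v ∈ Ici a, HasDerivWithinAt f (f' v) (Ici a) v) (hf' : ContinuousOn f' (Ici a))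
    {z : ℝ} (hz : 0 ≤ z) (haz : a < z ^ 2) :
    HasDerivAt (fun w => ∫ v in a..w ^ 2, (√v - w) * f' v) (f a - f (z ^ 2)) z := by
  have hclosed : (fun w => (∫ v in a..w ^ 2, √v * f' v) - w * (f (w ^ 2) - f a))
      =ᶠ[nhds z] fun w => ∫ v in a..w ^ 2, (√v - w) * f' v := by
    filter_upwards [(isOpen_lt continuous_const (continuous_pow 2)).mem_nhds haz] with w hw
    exact (integral_sqrt_sub_mul hf hf' hw.le w).symm
  have hA : HasDerivAt (fun w => ∫ v in a..w ^ 2, √v * f' v) (z * f' (z ^ 2) * (2 * z)) z := by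
    have h := hasDerivAt_integral_of_continuousOn_Ici hf'.sqrt_mul haz
    rw [sqrt_sq hz] at h
    exact h.hasDerivWithinAt.hasDerivAt_comp_sq haz
  have hF := (hf _ haz.le).hasDerivAt_comp_sq haz
  refine (hA.sub ((hasDerivAt_id z).mul (hF.sub_const (f a)))).congr_of_eventuallyEq
    hclosed.symm |>.congr_deriv ?_
  simp only [id]
  ring

end intervalIntegral

theorem cascade_I3_general (E₀ : ℝ) (hE₀ : 0 < E₀)
    (Ψ Ψ' Ψ'' : ℝ → ℝ)
    (h1 : ∀ v ∈ Ici E₀, HasDerivWithinAt Ψ (Ψ' v) (Ici E₀) v)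
    (h2 : ∀ v ∈ Ici E₀, HasDerivWithinAt Ψ' (Ψ'' v) (Ici E₀) v)
    (I₃ : ℝ → ℝ)
    (hI : ∀ e, I₃ e =
      36 * π * ∫ v in E₀..e, (v - Real.sqrt (e * v)) * Ψ' v / Real.sqrt v) :
    (∀ e ∈ Ici E₀, I₃ e = 36 * π * ∫ v in E₀..e, (Real.sqrt v - Real.sqrt e) * Ψ' v) ∧
    (∀ z ∈ Ioi (Real.sqrt E₀),
      DifferentiableAt ℝ (fun z => I₃ (z^2)) z ∧
      DifferentiableAt ℝ (deriv (fun z => I₃ (z^2))) z ∧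
      DifferentiableAt ℝ (deriv (deriv (fun z => I₃ (z^2)))) z) ∧
    (∀ z ∈ Ioi (Real.sqrt E₀),
      (2/π) * deriv (deriv (deriv (fun z => I₃ (z^2)))) z =
        -288 * z^2 * Ψ'' (z^2) - 144 * Ψ' (z^2)) := by
  have hΨ' : ContinuousOn Ψ' (Ici E₀) := fun v hv => (h2 v hv).continuousWithinAt
  have hI₃ : ∀ e ∈ Ici E₀, I₃ e = 36 * π * ∫ v in E₀..e, (√v - √e) * Ψ' v := fun e he => by
    rw [hI, intervalIntegral.integral_congr fun v hv => sub_sqrt_mul_mul_div_sqrt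
      (hE₀.trans_le (uIcc_of_le (mem_Ici.mp he) ▸ hv).1) (hE₀.le.trans he) (Ψ' v)]
  have hzE : ∀ z ∈ Ioi √E₀, 0 < z ∧ E₀ < z ^ 2 := fun z hz =>
    have hz0 : 0 < z := (sqrt_nonneg E₀).trans_lt hz
    ⟨hz0, (sqrt_lt' hz0).mp hz⟩
  have d1 (z) (hz' : z ∈ Ioi √E₀) :
      HasDerivAt (fun z => I₃ (z ^ 2)) (36 * π * (Ψ E₀ - Ψ (z ^ 2))) z := by
    refine ((intervalIntegral.hasDerivAt_integral_sq_sqrt_sub_mul h1 hΨ' (hzE z hz').1.le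
      (hzE z hz').2).const_mul (36 * π)).congr_of_eventuallyEq <|
      Filter.eventuallyEq_of_mem (isOpen_Ioi.mem_nhds hz') fun w hw => ?_
    rw [hI₃ _ (hzE w hw).2.le, sqrt_sq (hzE w hw).1.le]
  have d2 (z) (hz' : z ∈ Ioi √E₀) :
      HasDerivAt (deriv fun z => I₃ (z ^ 2)) (-72 * π * (z * Ψ' (z ^ 2))) z :=
    hasDerivAt_deriv_of_isOpen_s16 isOpen_Ioi d1 hz' <|
      (((h1 _ (hzE z hz').2.le).hasDerivAt_comp_sq (hzE z hz').2).const_sub _).const_mul _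
        |>.congr_deriv (by ring)
  have d3 (z) (hz' : z ∈ Ioi √E₀) : HasDerivAt (deriv (deriv fun z => I₃ (z ^ 2)))
      (-72 * π * (Ψ' (z ^ 2) + 2 * z ^ 2 * Ψ'' (z ^ 2))) z :=
    hasDerivAt_deriv_of_isOpen_s16 isOpen_Ioi d2 hz' <|
      ((hasDerivAt_id z).mul ((h2 _ (hzE z hz').2.le).hasDerivAt_comp_sq (hzE z hz').2))
        |>.const_mul _ |>.congr_deriv (by simp only [id]; ring)
  refine ⟨hI₃, fun z hz' => ⟨(d1 z hz').differentiableAt, (d2 z hz').differentiableAt,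
    (d3 z hz').differentiableAt⟩, fun z hz' => ?_⟩
  rw [(d3 z hz').deriv]
  field_simp
  ring

/-- Third-derivative cascade for `I₃`:
with `I₃(E) = 36π ∫_{E₀}^E (v − √(Ev)) Ψ′(v) v^{−1/2} dv
            = 36π ∫_{E₀}^E (√v − √E) Ψ′(v) dv`, the function
`z ↦ I₃(z²)` is three times differentiable on `(√E₀, ∞)` and
`(2/π) d³/dz³ I₃(z²) = −288 z² Ψ″(z²) − 144 Ψ′(z²)`. -/
theorem cascade_I3 (E₀ : ℝ) (hE₀ : 0 < E₀)
    (Ψ Ψ' Ψ'' Ψ''' : ℝ → ℝ)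
    (h1 : ∀ v ∈ Ici E₀, HasDerivWithinAt Ψ (Ψ' v) (Ici E₀) v)
    (h2 : ∀ v ∈ Ici E₀, HasDerivWithinAt Ψ' (Ψ'' v) (Ici E₀) v)
    (h3 : ∀ v ∈ Ici E₀, HasDerivWithinAt Ψ'' (Ψ''' v) (Ici E₀) v)
    (hc : ContinuousOn Ψ''' (Ici E₀))
    (I₃ : ℝ → ℝ)
    (hI : ∀ e, I₃ e =
      36 * π * ∫ v in E₀..e, (v - Real.sqrt (e * v)) * Ψ' v / Real.sqrt v) :
    (∀ e ∈ Ici E₀, I₃ e = 36 * π * ∫ v in E₀..e, (Real.sqrt v - Real.sqrt e) * Ψ' v) ∧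
    (∀ z ∈ Ioi (Real.sqrt E₀),
      DifferentiableAt ℝ (fun z => I₃ (z^2)) z ∧
      DifferentiableAt ℝ (deriv (fun z => I₃ (z^2))) z ∧
      DifferentiableAt ℝ (deriv (deriv (fun z => I₃ (z^2)))) z) ∧
    (∀ z ∈ Ioi (Real.sqrt E₀),
      (2/π) * deriv (deriv (deriv (fun z => I₃ (z^2)))) z =
        -288 * z^2 * Ψ'' (z^2) - 144 * Ψ' (z^2)) :=
  cascade_I3_general E₀ hE₀ Ψ Ψ' Ψ'' h1 h2 I₃ hI
end
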